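/- There exists a constant c > 0, depending only on L and h, such that for all u, φ, ψ of class C¹ on M̄ that vanish on the lateral boundary Γ_l = {0,L} × [−h,0] and on the bottom Γ_b = [0,L] × {−h}, and such that additionally ∫_{−h}^0 u(x,z) dz = 0 for all x, one has | ∫_M ( u ∂_x φ + w(u) ∂_z φ ) ψ dM | ≤ c ‖u‖_{H¹} ‖φ‖_{H¹} |ψ|^{1/2} ‖ψ‖_{H¹}^{1/2}. -/

import Mathlib

open MeasureTheory Set intervalIntegral

/-- Partial derivative in the first (horizontal, `x`) variable. -/
noncomputable def pdx (f : ℝ × ℝ → ℝ) (p : ℝ × ℝ) : ℝ := fderiv ℝ f p (1, 0)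

/-- Partial derivative in the second (vertical, `z`) variable. -/
noncomputable def pdz (f : ℝ × ℝ → ℝ) (p : ℝ × ℝ) : ℝ := fderiv ℝ f p (0, 1)

/-- The diagnostic vertical velocity `w(u)(x,z) = ∫_z^0 ∂ₓ u(x,s) ds`. -/
noncomputable def wOp (u : ℝ × ℝ → ℝ) (p : ℝ × ℝ) : ℝ := ∫ s in p.2..0, pdx u (p.1, s)

/-- The open domain `M = (0,L) × (-h,0)`. -/
def dom (L h : ℝ) : Set (ℝ × ℝ) := Ioo 0 L ×ˢ Ioo (-h) 0

/-- The closed domain `M̄ = [0,L] × [-h,0]`. -/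
def cdom (L h : ℝ) : Set (ℝ × ℝ) := Icc 0 L ×ˢ Icc (-h) 0

/-- The `L²(M)` norm. -/
noncomputable def l2 (L h : ℝ) (f : ℝ × ℝ → ℝ) : ℝ :=
  Real.sqrt (∫ p in dom L h, f p ^ 2)

/-- The `H¹(M)` norm. -/
noncomputable def h1n (L h : ℝ) (f : ℝ × ℝ → ℝ) : ℝ :=
  Real.sqrt (l2 L h f ^ 2 + l2 L h (pdx f) ^ 2 + l2 L h (pdz f) ^ 2)

/-- The `H²(M)` norm. -/
noncomputable def h2n (L h : ℝ) (f : ℝ × ℝ → ℝ) : ℝ :=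
  Real.sqrt (h1n L h f ^ 2 + l2 L h (pdx (pdx f)) ^ 2 + l2 L h (pdx (pdz f)) ^ 2
    + l2 L h (pdz (pdz f)) ^ 2)

/-!
The two terms of the integrand are controlled by one anisotropic estimate. Since `u` vanishes
on the bottom, `u(x,z)² ≤ ∫ 2|u||∂_z u| dz` along each vertical line, and
`|w(u)(x,z)| ≤ ∫ |∂ₓu| dz`; since `ψ` vanishes at `x = 0`, `ψ(x,z)² ≤ ∫ 2|ψ||∂ₓψ| dx` along
each horizontal line. So for `F = u` and `F = w(u)` the function `(Fψ)²` is dominated by a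
product `a(x) b(z)`, and Fubini gives `|Fψ|² ≤ (∫ a)(∫ b)`, where Cauchy–Schwarz bounds `∫ a`
by `‖u‖²_{H¹}` (resp. `h ‖u‖²_{H¹}`) and `∫ b` by `2 |ψ| ‖ψ‖_{H¹}`. Pairing `Fψ` with `∂ₓφ`
or `∂_zφ` gives the claim with `c = √2 (1 + √h)`.
-/

lemma integral_abs_mul_abs_le_sqrt_mul_sqrt {α : Type*} [MeasurableSpace α] {μ : Measure α}
    {f g : α → ℝ} (hf : MemLp f 2 μ) (hg : MemLp g 2 μ) :
    ∫ a, |f a| * |g a| ∂μ ≤ √(∫ a, f a ^ 2 ∂μ) * √(∫ a, g a ^ 2 ∂μ) := by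
  have hpq : Real.HolderConjugate 2 2 := .two_two
  have key := integral_mul_norm_le_Lp_mul_Lq hpq (by simpa using hf) (by simpa using hg)
  simp only [Real.norm_eq_abs, Real.rpow_two, sq_abs] at key
  simpa only [Real.sqrt_eq_rpow, one_div] using key

lemma sq_integral_abs_le_measureReal_mul_integral_sq {α : Type*} [MeasurableSpace α]
    {μ : Measure α} [IsFiniteMeasure μ] {g : α → ℝ} (hg : MemLp g 2 μ) :
    (∫ a, |g a| ∂μ) ^ 2 ≤ μ.real univ * ∫ a, g a ^ 2 ∂μ := by
  have key := integral_abs_mul_abs_le_sqrt_mul_sqrt hg (memLp_const (1 : ℝ))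
  simp only [abs_one, mul_one, one_pow, MeasureTheory.integral_const, smul_eq_mul] at key
  calc (∫ a, |g a| ∂μ) ^ 2 ≤ (√(∫ a, g a ^ 2 ∂μ) * √(μ.real univ)) ^ 2 :=
        pow_le_pow_left₀ (integral_nonneg fun _ => abs_nonneg _) key 2
    _ = μ.real univ * ∫ a, g a ^ 2 ∂μ := by
        rw [mul_pow, Real.sq_sqrt (integral_nonneg fun _ => sq_nonneg _),
          Real.sq_sqrt measureReal_nonneg, mul_comm]

lemma sq_le_setIntegral_two_mul_abs_mul_abs_deriv {g g' : ℝ → ℝ}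
    (hg : ∀ t, HasDerivAt g (g' t) t) (hg' : Continuous g') {a b x : ℝ} (ha : g a = 0)
    (hx : x ∈ Icc a b) :
    g x ^ 2 ≤ ∫ t in Ioo a b, 2 * (|g t| * |g' t|) := by
  have hcont : Continuous g := continuous_iff_continuousAt.2 fun t => (hg t).continuousAt
  have hprod : Continuous fun t => 2 * g t * g' t := by fun_prop
  have hbound : Continuous fun t => 2 * (|g t| * |g' t|) := by fun_prop
  have hftc : ∫ t in a..x, 2 * g t * g' t = g x ^ 2 := by
    rw [integral_eq_sub_of_hasDerivAt (fun t _ => by simpa using (hg t).fun_pow 2)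
      (hprod.intervalIntegrable a x), ha]
    ring
  calc g x ^ 2 = ∫ t in a..x, 2 * g t * g' t := hftc.symm
    _ ≤ ∫ t in a..x, 2 * (|g t| * |g' t|) :=
        integral_mono_on hx.1 (hprod.intervalIntegrable a x) (hbound.intervalIntegrable a x)
          fun t _ => by
            rw [mul_assoc, ← abs_mul]; exact mul_le_mul_of_nonneg_left (le_abs_self _) two_pos.le
    _ ≤ ∫ t in a..b, 2 * (|g t| * |g' t|) :=
        integral_mono_interval le_rfl hx.1 hx.2 (.of_forall fun t => by positivity)
          (hbound.intervalIntegrable a b)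
    _ = ∫ t in Ioo a b, 2 * (|g t| * |g' t|) := by
        rw [integral_of_le (hx.1.trans hx.2), integral_Ioc_eq_integral_Ioo]

lemma continuous_setIntegral_Ioo_snd {G : ℝ × ℝ → ℝ} (hG : Continuous G) (a b : ℝ) :
    Continuous fun x => ∫ z in Ioo a b, G (x, z) :=
  (continuous_parametric_integral_of_continuous (f := fun x z => G (x, z)) hG
    isCompact_Icc).congr fun _ => integral_Icc_eq_integral_Ioo

lemma continuous_setIntegral_Ioo_fst {G : ℝ × ℝ → ℝ} (hG : Continuous G) (a b : ℝ) :
    Continuous fun z => ∫ x in Ioo a b, G (x, z) :=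
  (continuous_parametric_integral_of_continuous (f := fun z x => G (x, z)) (by fun_prop)
    isCompact_Icc).congr fun _ => integral_Icc_eq_integral_Ioo

section PartialDerivatives

variable {f : ℝ × ℝ → ℝ}

lemma hasDerivAt_pdx (hf : ContDiff ℝ 1 f) (x z : ℝ) :
    HasDerivAt (fun t => f (t, z)) (pdx f (x, z)) x :=
  ((hf.differentiable one_ne_zero (x, z)).hasFDerivAt).comp_hasDerivAt x
    ((hasDerivAt_id x).prodMk (hasDerivAt_const x z))

lemma hasDerivAt_pdz (hf : ContDiff ℝ 1 f) (x z : ℝ) :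
    HasDerivAt (fun t => f (x, t)) (pdz f (x, z)) z :=
  ((hf.differentiable one_ne_zero (x, z)).hasFDerivAt).comp_hasDerivAt z
    ((hasDerivAt_const z x).prodMk (hasDerivAt_id z))

@[fun_prop]
lemma continuous_pdx (hf : ContDiff ℝ 1 f) : Continuous (pdx f) :=
  (hf.continuous_fderiv one_ne_zero).clm_apply continuous_const

@[fun_prop]
lemma continuous_pdz (hf : ContDiff ℝ 1 f) : Continuous (pdz f) :=
  (hf.continuous_fderiv one_ne_zero).clm_apply continuous_const

lemma continuous_wOp (hf : ContDiff ℝ 1 f) : Continuous (wOp f) := by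
  have hc : Continuous fun q : (ℝ × ℝ) × ℝ => pdx f (q.1.1, q.2) := by fun_prop
  have hint : Continuous fun p : ℝ × ℝ => ∫ s in (0:ℝ)..p.2, pdx f (p.1, s) :=
    continuous_parametric_intervalIntegral_of_continuous
      (f := fun (p : ℝ × ℝ) (s : ℝ) => pdx f (p.1, s)) hc continuous_snd
  exact hint.neg.congr fun p => by rw [Pi.neg_apply, wOp, ← integral_symm]

end PartialDerivatives

section Rectangle

variable {L h : ℝ}

lemma measurableSet_dom : MeasurableSet (dom L h) :=
  measurableSet_Ioo.prod measurableSet_Ioo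

lemma integrableOn_dom {f : ℝ × ℝ → ℝ} (hf : Continuous f) : IntegrableOn f (dom L h) :=
  (hf.continuousOn.integrableOn_compact (isCompact_Icc.prod isCompact_Icc)).mono_set
    (prod_mono Ioo_subset_Icc_self Ioo_subset_Icc_self)

lemma memLp_two_dom {f : ℝ × ℝ → ℝ} (hf : Continuous f) :
    MemLp f 2 (volume.restrict (dom L h)) :=
  (memLp_two_iff_integrable_sq hf.aestronglyMeasurable).2 (integrableOn_dom (by fun_prop))

lemma setIntegral_dom_eq_integral_integral {f : ℝ × ℝ → ℝ} (hf : IntegrableOn f (dom L h)) :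
    ∫ p in dom L h, f p = ∫ x in Ioo 0 L, ∫ z in Ioo (-h) 0, f (x, z) :=
  setIntegral_prod f hf

lemma setIntegral_dom_eq_integral_integral_swap {f : ℝ × ℝ → ℝ}
    (hf : IntegrableOn f (dom L h)) :
    ∫ p in dom L h, f p = ∫ z in Ioo (-h) 0, ∫ x in Ioo 0 L, f (x, z) := by
  rw [setIntegral_dom_eq_integral_integral hf]
  rw [IntegrableOn, dom, Measure.volume_eq_prod, ← Measure.prod_restrict] at hf
  exact integral_integral_swap (f := fun x z => f (x, z)) hf

lemma setIntegral_dom_mul (a b : ℝ → ℝ) :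
    ∫ p in dom L h, a p.1 * b p.2 = (∫ x in Ioo 0 L, a x) * ∫ z in Ioo (-h) 0, b z := by
  rw [dom, Measure.volume_eq_prod, ← Measure.prod_restrict]
  exact integral_prod_mul a b

end Rectangle

section Norms

variable {L h : ℝ} {f g : ℝ × ℝ → ℝ}

lemma l2_nonneg : 0 ≤ l2 L h f := Real.sqrt_nonneg _

lemma h1n_nonneg : 0 ≤ h1n L h f := Real.sqrt_nonneg _

lemma l2_sq : l2 L h f ^ 2 = ∫ p in dom L h, f p ^ 2 :=
  Real.sq_sqrt (integral_nonneg fun _ => sq_nonneg _)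

lemma h1n_sq : h1n L h f ^ 2 = l2 L h f ^ 2 + l2 L h (pdx f) ^ 2 + l2 L h (pdz f) ^ 2 :=
  Real.sq_sqrt (by positivity)

lemma l2_pdx_le_h1n : l2 L h (pdx f) ≤ h1n L h f :=
  Real.le_sqrt_of_sq_le (by nlinarith [sq_nonneg (l2 L h f), sq_nonneg (l2 L h (pdz f))])

lemma l2_pdz_le_h1n : l2 L h (pdz f) ≤ h1n L h f :=
  Real.le_sqrt_of_sq_le (by nlinarith [sq_nonneg (l2 L h f), sq_nonneg (l2 L h (pdx f))])

lemma two_mul_l2_mul_l2_pdz_le_h1n_sq : 2 * l2 L h f * l2 L h (pdz f) ≤ h1n L h f ^ 2 := by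
  rw [h1n_sq]
  nlinarith [sq_nonneg (l2 L h f - l2 L h (pdz f)), sq_nonneg (l2 L h (pdx f))]

lemma setIntegral_abs_mul_abs_le_l2_mul_l2 (hf : Continuous f) (hg : Continuous g) :
    ∫ p in dom L h, |f p| * |g p| ≤ l2 L h f * l2 L h g :=
  integral_abs_mul_abs_le_sqrt_mul_sqrt (memLp_two_dom hf) (memLp_two_dom hg)

lemma abs_setIntegral_mul_le_l2_mul_l2 (hf : Continuous f) (hg : Continuous g) :
    |∫ p in dom L h, f p * g p| ≤ l2 L h f * l2 L h g :=
  calc |∫ p in dom L h, f p * g p| ≤ ∫ p in dom L h, |f p * g p| :=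
        abs_integral_le_integral_abs
    _ = ∫ p in dom L h, |f p| * |g p| := by simp only [abs_mul]
    _ ≤ l2 L h f * l2 L h g := setIntegral_abs_mul_abs_le_l2_mul_l2 hf hg

lemma l2_mul_sq_le_of_sq_le {F G : ℝ × ℝ → ℝ} {a b : ℝ → ℝ} (ha : IntegrableOn a (Ioo 0 L))
    (hb : IntegrableOn b (Ioo (-h) 0)) (hFa : ∀ p ∈ dom L h, F p ^ 2 ≤ a p.1)
    (hGb : ∀ p ∈ dom L h, G p ^ 2 ≤ b p.2) :
    l2 L h (F * G) ^ 2 ≤ (∫ x in Ioo 0 L, a x) * ∫ z in Ioo (-h) 0, b z := by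
  have hab : IntegrableOn (fun p : ℝ × ℝ => a p.1 * b p.2) (dom L h) := by
    rw [IntegrableOn, dom, Measure.volume_eq_prod, ← Measure.prod_restrict]
    exact ha.mul_prod hb
  rw [l2_sq, ← setIntegral_dom_mul]
  refine integral_mono_of_nonneg (.of_forall fun _ => sq_nonneg _) hab
    ((ae_restrict_iff' measurableSet_dom).2 (.of_forall fun p hp => ?_))
  calc ((F * G) p) ^ 2 = F p ^ 2 * G p ^ 2 := by rw [Pi.mul_apply, mul_pow]
    _ ≤ a p.1 * b p.2 :=
        mul_le_mul (hFa p hp) (hGb p hp) (sq_nonneg _) ((sq_nonneg _).trans (hFa p hp))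

end Norms

section LineBounds

variable {L h : ℝ} {f : ℝ × ℝ → ℝ}

lemma sq_le_setIntegral_vertical (hf : ContDiff ℝ 1 f) {x z : ℝ} (hbot : f (x, -h) = 0)
    (hz : z ∈ Icc (-h) 0) :
    f (x, z) ^ 2 ≤ ∫ s in Ioo (-h) 0, 2 * (|f (x, s)| * |pdz f (x, s)|) :=
  sq_le_setIntegral_two_mul_abs_mul_abs_deriv (hasDerivAt_pdz hf x) (by fun_prop) hbot hz

lemma sq_le_setIntegral_horizontal (hf : ContDiff ℝ 1 f) {x z : ℝ} (hlat : f (0, z) = 0)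
    (hx : x ∈ Icc 0 L) :
    f (x, z) ^ 2 ≤ ∫ t in Ioo 0 L, 2 * (|f (t, z)| * |pdx f (t, z)|) :=
  sq_le_setIntegral_two_mul_abs_mul_abs_deriv (fun t => hasDerivAt_pdx hf t z) (by fun_prop)
    hlat hx

lemma abs_wOp_le (hf : ContDiff ℝ 1 f) {x z : ℝ} (hz : z ∈ Icc (-h) 0) :
    |wOp f (x, z)| ≤ ∫ s in Ioo (-h) 0, |pdx f (x, s)| :=
  calc |wOp f (x, z)| ≤ ∫ s in z..0, |pdx f (x, s)| := abs_integral_le_integral_abs hz.2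
    _ ≤ ∫ s in (-h)..0, |pdx f (x, s)| :=
        integral_mono_interval hz.1 hz.2 le_rfl (.of_forall fun _ => abs_nonneg _)
          ((by fun_prop : Continuous fun s => |pdx f (x, s)|).intervalIntegrable _ _)
    _ = ∫ s in Ioo (-h) 0, |pdx f (x, s)| := by
        rw [integral_of_le (hz.1.trans hz.2), integral_Ioc_eq_integral_Ioo]

lemma setIntegral_two_mul_abs_mul_abs_pdz_le (hf : ContDiff ℝ 1 f) :
    ∫ x in Ioo 0 L, ∫ s in Ioo (-h) 0, 2 * (|f (x, s)| * |pdz f (x, s)|) ≤ h1n L h f ^ 2 := by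
  rw [← setIntegral_dom_eq_integral_integral (f := fun p => 2 * (|f p| * |pdz f p|))
    (integrableOn_dom (by fun_prop)), MeasureTheory.integral_const_mul]
  have := setIntegral_abs_mul_abs_le_l2_mul_l2 (L := L) (h := h) hf.continuous
    (continuous_pdz hf)
  linarith [two_mul_l2_mul_l2_pdz_le_h1n_sq (L := L) (h := h) (f := f)]

lemma setIntegral_two_mul_abs_mul_abs_pdx_le (hf : ContDiff ℝ 1 f) :
    ∫ z in Ioo (-h) 0, ∫ t in Ioo 0 L, 2 * (|f (t, z)| * |pdx f (t, z)|) ≤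
      2 * l2 L h f * h1n L h f := by
  rw [← setIntegral_dom_eq_integral_integral_swap (f := fun p => 2 * (|f p| * |pdx f p|))
    (integrableOn_dom (by fun_prop)), MeasureTheory.integral_const_mul]
  have := setIntegral_abs_mul_abs_le_l2_mul_l2 (L := L) (h := h) hf.continuous
    (continuous_pdx hf)
  nlinarith [l2_pdx_le_h1n (L := L) (h := h) (f := f), l2_nonneg (L := L) (h := h) (f := f)]

lemma setIntegral_sq_setIntegral_abs_pdx_le (hh : 0 ≤ h) (hf : ContDiff ℝ 1 f) :
    ∫ x in Ioo 0 L, (∫ s in Ioo (-h) 0, |pdx f (x, s)|) ^ 2 ≤ h * h1n L h f ^ 2 := by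
  have hline : ∀ x, (∫ s in Ioo (-h) 0, |pdx f (x, s)|) ^ 2 ≤
      h * ∫ s in Ioo (-h) 0, pdx f (x, s) ^ 2 := fun x => by
    have hc : Continuous fun s => pdx f (x, s) := by fun_prop
    have := sq_integral_abs_le_measureReal_mul_integral_sq (μ := volume.restrict (Ioo (-h) 0))
      ((memLp_two_iff_integrable_sq hc.aestronglyMeasurable).2
        ((hc.pow 2).integrableOn_Icc.mono_set Ioo_subset_Icc_self))
    rwa [measureReal_restrict_apply_univ, Real.volume_real_Ioo_of_le (by linarith),
      sub_neg_eq_add, zero_add] at this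
  have hint : Continuous fun x => h * ∫ s in Ioo (-h) 0, pdx f (x, s) ^ 2 :=
    (continuous_setIntegral_Ioo_snd (G := fun p => pdx f p ^ 2) (by fun_prop) _ _).const_mul h
  calc ∫ x in Ioo 0 L, (∫ s in Ioo (-h) 0, |pdx f (x, s)|) ^ 2
      ≤ ∫ x in Ioo 0 L, h * ∫ s in Ioo (-h) 0, pdx f (x, s) ^ 2 :=
        integral_mono_of_nonneg (.of_forall fun _ => sq_nonneg _)
          (hint.integrableOn_Icc.mono_set Ioo_subset_Icc_self)
          (.of_forall hline)
    _ = h * l2 L h (pdx f) ^ 2 := by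
        rw [MeasureTheory.integral_const_mul, l2_sq, setIntegral_dom_eq_integral_integral
          (f := fun p => pdx f p ^ 2) (integrableOn_dom (by fun_prop))]
    _ ≤ h * h1n L h f ^ 2 := by
        gcongr
        exacts [l2_nonneg, l2_pdx_le_h1n]

end LineBounds

section TrilinearBound

variable {L h : ℝ}

lemma l2_mul_sq_le_of_lateral {F ψ : ℝ × ℝ → ℝ} {a : ℝ → ℝ} (ha : IntegrableOn a (Ioo 0 L))
    (ha0 : ∀ x, 0 ≤ a x) (hFa : ∀ p ∈ dom L h, F p ^ 2 ≤ a p.1) (hψ : ContDiff ℝ 1 ψ)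
    (hψl : ∀ z ∈ Icc (-h) 0, ψ (0, z) = 0) :
    l2 L h (F * ψ) ^ 2 ≤ (∫ x in Ioo 0 L, a x) * (2 * l2 L h ψ * h1n L h ψ) := by
  have hb : Continuous fun z => ∫ t in Ioo 0 L, 2 * (|ψ (t, z)| * |pdx ψ (t, z)|) :=
    continuous_setIntegral_Ioo_fst (G := fun p => 2 * (|ψ p| * |pdx ψ p|)) (by fun_prop) _ _
  calc l2 L h (F * ψ) ^ 2
      ≤ (∫ x in Ioo 0 L, a x) *
          ∫ z in Ioo (-h) 0, ∫ t in Ioo 0 L, 2 * (|ψ (t, z)| * |pdx ψ (t, z)|) :=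
        l2_mul_sq_le_of_sq_le ha (hb.integrableOn_Icc.mono_set Ioo_subset_Icc_self) hFa
          fun p hp => sq_le_setIntegral_horizontal hψ
            (hψl p.2 (Ioo_subset_Icc_self hp.2)) (Ioo_subset_Icc_self hp.1)
    _ ≤ (∫ x in Ioo 0 L, a x) * (2 * l2 L h ψ * h1n L h ψ) :=
        mul_le_mul_of_nonneg_left (setIntegral_two_mul_abs_mul_abs_pdx_le hψ)
          (integral_nonneg ha0)

lemma abs_setIntegral_mul_mul_le {F D ψ : ℝ × ℝ → ℝ} {a : ℝ → ℝ} (hF : Continuous F)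
    (hD : Continuous D) (ha : IntegrableOn a (Ioo 0 L)) (ha0 : ∀ x, 0 ≤ a x)
    (hFa : ∀ p ∈ dom L h, F p ^ 2 ≤ a p.1) (hψ : ContDiff ℝ 1 ψ)
    (hψl : ∀ z ∈ Icc (-h) 0, ψ (0, z) = 0) :
    |∫ p in dom L h, F p * D p * ψ p| ≤
      √((∫ x in Ioo 0 L, a x) * (2 * l2 L h ψ * h1n L h ψ)) * l2 L h D :=
  calc |∫ p in dom L h, F p * D p * ψ p| = |∫ p in dom L h, (F * ψ) p * D p| := by
        simp only [Pi.mul_apply, mul_right_comm]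
    _ ≤ l2 L h (F * ψ) * l2 L h D := abs_setIntegral_mul_le_l2_mul_l2 (hF.mul hψ.continuous) hD
    _ ≤ _ := mul_le_mul_of_nonneg_right
        (Real.le_sqrt_of_sq_le (l2_mul_sq_le_of_lateral ha ha0 hFa hψ hψl)) l2_nonneg

variable {u φ ψ : ℝ × ℝ → ℝ}

lemma abs_setIntegral_mul_pdx_mul_le (hu : ContDiff ℝ 1 u) (hφ : ContDiff ℝ 1 φ)
    (hψ : ContDiff ℝ 1 ψ) (hub : ∀ x ∈ Icc 0 L, u (x, -h) = 0)
    (hψl : ∀ z ∈ Icc (-h) 0, ψ (0, z) = 0) :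
    |∫ p in dom L h, u p * pdx φ p * ψ p| ≤
      h1n L h u * h1n L h φ * √(2 * l2 L h ψ * h1n L h ψ) := by
  have hS : 0 ≤ 2 * l2 L h ψ * h1n L h ψ :=
    mul_nonneg (mul_nonneg zero_le_two l2_nonneg) h1n_nonneg
  have ha : Continuous fun x => ∫ s in Ioo (-h) 0, 2 * (|u (x, s)| * |pdz u (x, s)|) :=
    continuous_setIntegral_Ioo_snd (G := fun p => 2 * (|u p| * |pdz u p|)) (by fun_prop) _ _
  calc |∫ p in dom L h, u p * pdx φ p * ψ p|
      ≤ √((∫ x in Ioo 0 L, ∫ s in Ioo (-h) 0, 2 * (|u (x, s)| * |pdz u (x, s)|)) *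
          (2 * l2 L h ψ * h1n L h ψ)) * l2 L h (pdx φ) :=
        abs_setIntegral_mul_mul_le hu.continuous (continuous_pdx hφ)
          (ha.integrableOn_Icc.mono_set Ioo_subset_Icc_self)
          (fun _ => integral_nonneg fun _ => by positivity)
          (fun p hp => sq_le_setIntegral_vertical hu (hub p.1 (Ioo_subset_Icc_self hp.1))
            (Ioo_subset_Icc_self hp.2)) hψ hψl
    _ ≤ √(h1n L h u ^ 2 * (2 * l2 L h ψ * h1n L h ψ)) * h1n L h φ := by
        gcongr
        exacts [l2_nonneg, setIntegral_two_mul_abs_mul_abs_pdz_le hu, l2_pdx_le_h1n]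
    _ = h1n L h u * h1n L h φ * √(2 * l2 L h ψ * h1n L h ψ) := by
        rw [Real.sqrt_mul' _ hS, Real.sqrt_sq h1n_nonneg]
        ring

lemma abs_setIntegral_wOp_mul_pdz_mul_le (hh : 0 ≤ h) (hu : ContDiff ℝ 1 u)
    (hφ : ContDiff ℝ 1 φ) (hψ : ContDiff ℝ 1 ψ) (hψl : ∀ z ∈ Icc (-h) 0, ψ (0, z) = 0) :
    |∫ p in dom L h, wOp u p * pdz φ p * ψ p| ≤
      √h * h1n L h u * h1n L h φ * √(2 * l2 L h ψ * h1n L h ψ) := by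
  have hS : 0 ≤ 2 * l2 L h ψ * h1n L h ψ :=
    mul_nonneg (mul_nonneg zero_le_two l2_nonneg) h1n_nonneg
  have ha : Continuous fun x => (∫ s in Ioo (-h) 0, |pdx u (x, s)|) ^ 2 :=
    (continuous_setIntegral_Ioo_snd (G := fun p => |pdx u p|) (by fun_prop) _ _).pow 2
  calc |∫ p in dom L h, wOp u p * pdz φ p * ψ p|
      ≤ √((∫ x in Ioo 0 L, (∫ s in Ioo (-h) 0, |pdx u (x, s)|) ^ 2) *
          (2 * l2 L h ψ * h1n L h ψ)) * l2 L h (pdz φ) :=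
        abs_setIntegral_mul_mul_le (continuous_wOp hu) (continuous_pdz hφ)
          (ha.integrableOn_Icc.mono_set Ioo_subset_Icc_self) (fun _ => sq_nonneg _)
          (fun p hp => sq_le_sq.2 ((abs_wOp_le hu (Ioo_subset_Icc_self hp.2)).trans
            (le_abs_self _))) hψ hψl
    _ ≤ √(h * h1n L h u ^ 2 * (2 * l2 L h ψ * h1n L h ψ)) * h1n L h φ := by
        gcongr
        exacts [l2_nonneg, setIntegral_sq_setIntegral_abs_pdx_le hh hu, l2_pdz_le_h1n]
    _ = √h * h1n L h u * h1n L h φ * √(2 * l2 L h ψ * h1n L h ψ) := by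
        rw [Real.sqrt_mul' _ hS, Real.sqrt_mul hh, Real.sqrt_sq h1n_nonneg]
        ring

end TrilinearBound

theorem stmt9_general (L h : ℝ) (hh : 0 < h) :
    ∃ c > 0, ∀ u φ ψ : ℝ × ℝ → ℝ,
      ContDiff ℝ 1 u → ContDiff ℝ 1 φ → ContDiff ℝ 1 ψ →
      (∀ z ∈ Icc (-h) (0:ℝ), u (0, z) = 0 ∧ u (L, z) = 0) →
      (∀ x ∈ Icc (0:ℝ) L, u (x, -h) = 0) →
      (∀ z ∈ Icc (-h) (0:ℝ), φ (0, z) = 0 ∧ φ (L, z) = 0) →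
      (∀ x ∈ Icc (0:ℝ) L, φ (x, -h) = 0) →
      (∀ z ∈ Icc (-h) (0:ℝ), ψ (0, z) = 0 ∧ ψ (L, z) = 0) →
      (∀ x ∈ Icc (0:ℝ) L, ψ (x, -h) = 0) →
      (∀ x ∈ Icc (0:ℝ) L, (∫ z in (-h)..(0:ℝ), u (x, z)) = 0) →
      |∫ p in dom L h, (u p * pdx φ p + wOp u p * pdz φ p) * ψ p| ≤
        c * h1n L h u * h1n L h φ * l2 L h ψ ^ ((1:ℝ)/2) * h1n L h ψ ^ ((1:ℝ)/2) := by
  refine ⟨√2 * (1 + √h), by positivity, ?_⟩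
  intro u φ ψ hu hφ hψ _ hub _ _ hψl _ _
  have hψl₀ : ∀ z ∈ Icc (-h) 0, ψ (0, z) = 0 := fun z hz => (hψl z hz).1
  have hsplit : ∫ p in dom L h, (u p * pdx φ p + wOp u p * pdz φ p) * ψ p =
      (∫ p in dom L h, u p * pdx φ p * ψ p) + ∫ p in dom L h, wOp u p * pdz φ p * ψ p := by
    rw [← integral_add (integrableOn_dom (by fun_prop))
      (integrableOn_dom (by have := continuous_wOp hu; fun_prop))]
    simp only [add_mul]
  have hsqrt : √(2 * l2 L h ψ * h1n L h ψ) = √2 * √(l2 L h ψ) * √(h1n L h ψ) := by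
    rw [Real.sqrt_mul (mul_nonneg zero_le_two l2_nonneg), Real.sqrt_mul zero_le_two]
  rw [← Real.sqrt_eq_rpow, ← Real.sqrt_eq_rpow, hsplit]
  calc _ ≤ |∫ p in dom L h, u p * pdx φ p * ψ p| +
        |∫ p in dom L h, wOp u p * pdz φ p * ψ p| := abs_add_le _ _
    _ ≤ h1n L h u * h1n L h φ * √(2 * l2 L h ψ * h1n L h ψ) +
        √h * h1n L h u * h1n L h φ * √(2 * l2 L h ψ * h1n L h ψ) :=
        add_le_add (abs_setIntegral_mul_pdx_mul_le hu hφ hψ hub hψl₀)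
          (abs_setIntegral_wOp_mul_pdz_mul_le hh.le hu hφ hψ hψl₀)
    _ = √2 * (1 + √h) * h1n L h u * h1n L h φ * √(l2 L h ψ) * √(h1n L h ψ) := by
        rw [hsqrt]
        ring

theorem stmt9 (L h : ℝ) (hL : 0 < L) (hh : 0 < h) :
    ∃ c > 0, ∀ u φ ψ : ℝ × ℝ → ℝ,
      ContDiff ℝ 1 u → ContDiff ℝ 1 φ → ContDiff ℝ 1 ψ →
      (∀ z ∈ Icc (-h) (0:ℝ), u (0, z) = 0 ∧ u (L, z) = 0) →
      (∀ x ∈ Icc (0:ℝ) L, u (x, -h) = 0) →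
      (∀ z ∈ Icc (-h) (0:ℝ), φ (0, z) = 0 ∧ φ (L, z) = 0) →
      (∀ x ∈ Icc (0:ℝ) L, φ (x, -h) = 0) →
      (∀ z ∈ Icc (-h) (0:ℝ), ψ (0, z) = 0 ∧ ψ (L, z) = 0) →
      (∀ x ∈ Icc (0:ℝ) L, ψ (x, -h) = 0) →
      (∀ x ∈ Icc (0:ℝ) L, (∫ z in (-h)..(0:ℝ), u (x, z)) = 0) →
      |∫ p in dom L h, (u p * pdx φ p + wOp u p * pdz φ p) * ψ p| ≤
        c * h1n L h u * h1n L h φ * l2 L h ψ ^ ((1:ℝ)/2) * h1n L h ψ ^ ((1:ℝ)/2) :=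
  stmt9_general L h hh
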